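/- Let S = (H, w, μ) be a consistent summary, q a CQ with res(q) ⊆ dom(μ), τ an answer to μ(q) on H, and P ∈ B_τ. Then for every π ∈ MaxExp_τ(P), the expectation of the variable-free query π(q) satisfies E_S[π(q)] = F(τ,P). -/

import Mathlib

/- ## Basic RDF notions -/

attribute [local instance] Classical.propDecidable

/-- A term is a resource or a variable. -/
inductive Term (R V : Type) where
  | res : R → Term R V
  | var : V → Term R V
deriving DecidableEq

/-- An atom is a triple of terms. -/
abbrev Atom (R V : Type) := Term R V × Term R V × Term R V

/-- An RDF graph is a finite set of triples of resources. -/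
abbrev RDFGraph (R : Type) := Finset (R × R × R)

/-- A conjunctive query is a finite set of atoms. -/
abbrev CQ (R V : Type) := Finset (Atom R V)

variable {R V : Type} [DecidableEq R] [DecidableEq V]

/-- The resources occurring in an RDF graph. -/
def graphRes (G : RDFGraph R) : Finset R :=
  G.image (fun t => t.1) ∪ G.image (fun t => t.2.1) ∪ G.image (fun t => t.2.2)

/-- A summary `S = (H, w, μ)`: a summarisation graph `H`, a weight function `w`
positive on `H`, and a summarisation function `μ` defined on a finite set `dom` of
resources, surjective onto the resources of `H` (the buckets). -/
structure Summary (R : Type) [DecidableEq R] where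
  H : RDFGraph R
  w : R × R × R → ℕ
  dom : Finset R
  μ : R → R
  w_pos : ∀ h ∈ H, 0 < w h
  surj : ∀ b ∈ graphRes H, ∃ r ∈ dom, μ r = b

/-- Application of `μ` to a resource (resources outside `dom μ` are left unchanged). -/
def appMu (S : Summary R) (r : R) : R := if r ∈ S.dom then S.μ r else r

/-- Application of `μ` to a triple of resources. -/
def muT (S : Summary R) (t : R × R × R) : R × R × R :=
  (appMu S t.1, appMu S t.2.1, appMu S t.2.2)

/-- The `S`-size of a bucket: the number of resources mapped to it. -/
def size1 (S : Summary R) (b : R) : ℕ := (S.dom.filter (fun r => S.μ r = b)).card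

/-- The `S`-size of a triple of buckets. -/
def size3 (S : Summary R) (h : R × R × R) : ℕ := size1 S h.1 * size1 S h.2.1 * size1 S h.2.2

/-- `S` represents the RDF graph `G`. -/
def represents (S : Summary R) (G : RDFGraph R) : Prop :=
  graphRes G ⊆ S.dom ∧ S.H = G.image (muT S) ∧
    ∀ h ∈ S.H, S.w h = (G.filter (fun t => muT S t = h)).card

/-- `⟦S⟧`: the set of all RDF graphs represented by `S`. -/
def worlds (S : Summary R) : Set (RDFGraph R) := {G | represents S G}

/-- A summary is consistent if it represents at least one graph. -/
def consistent (S : Summary R) : Prop := (worlds S).Nonempty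

/- ## Queries, substitutions and answers -/

def varsT : Term R V → Finset V
  | .res _ => ∅
  | .var x => {x}

def resT : Term R V → Finset R
  | .res r => {r}
  | .var _ => ∅

def varsA (a : Atom R V) : Finset V := varsT a.1 ∪ varsT a.2.1 ∪ varsT a.2.2

def resA (a : Atom R V) : Finset R := resT a.1 ∪ resT a.2.1 ∪ resT a.2.2

/-- The variables of a CQ. -/
def varsQ (q : CQ R V) : Finset V := q.biUnion varsA

/-- The resources of a CQ. -/
def resQ (q : CQ R V) : Finset R := q.biUnion resA

/-- The terms of a CQ. -/
def termsQ (q : CQ R V) : Finset (Term R V) := q.biUnion (fun a => {a.1, a.2.1, a.2.2})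

/-- A substitution (a partial map from variables to resources) applied to a term. -/
def appT (π : V → Option R) : Term R V → Option R
  | .res r => some r
  | .var x => π x

/-- Application of a substitution to a term, with a default value (only used when the
substitution is undefined on a variable of the term). -/
def appTD [Inhabited R] (π : V → Option R) (t : Term R V) : R := (appT π t).getD default

/-- Application of a substitution to an atom. -/
def appAtomD [Inhabited R] (π : V → Option R) (a : Atom R V) : R × R × R :=
  (appTD π a.1, appTD π a.2.1, appTD π a.2.2)

/-- `ans(q, G)`: the answers to the CQ `q` on the graph `G`, i.e. substitutions whose
domain is exactly `var(q)` and which map every atom of `q` into `G`. -/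
def ansSet [Inhabited R] (q : CQ R V) (G : RDFGraph R) : Set (V → Option R) :=
  {π | (∀ x, (π x).isSome ↔ x ∈ varsQ q) ∧ ∀ a ∈ q, appAtomD π a ∈ G}

/-- `E_S[q]`: the expected cardinality of `q` over the graphs represented by `S`. -/
noncomputable def expect [Inhabited R] (S : Summary R) (q : CQ R V) : ℝ :=
  (∑ᶠ G ∈ worlds S, ((ansSet q G).ncard : ℝ)) / ((worlds S).ncard : ℝ)

/-- `v_S[q]`: the variance of the cardinality of `q` over the graphs represented by `S`. -/
noncomputable def varq [Inhabited R] (S : Summary R) (q : CQ R V) : ℝ :=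
  (∑ᶠ G ∈ worlds S, (((ansSet q G).ncard : ℝ) - expect S q) ^ 2) / ((worlds S).ncard : ℝ)

/-- `μ` applied to a term. -/
def muTerm (S : Summary R) : Term R V → Term R V
  | .res r => .res (appMu S r)
  | .var x => .var x

/-- `μ` applied to an atom. -/
def muAtom (S : Summary R) (a : Atom R V) : Atom R V :=
  (muTerm S a.1, muTerm S a.2.1, muTerm S a.2.2)

/-- `μ(q)`: the CQ obtained by applying `μ` to every atom of `q`. -/
def muQ (S : Summary R) (q : CQ R V) : CQ R V := q.image (muAtom S)

/- ## Partitions of a query -/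

/-- A partition of a CQ `q`: mutually disjoint nonempty subsets of `q` covering `q`. -/
def IsPartition (q : CQ R V) (P : Finset (CQ R V)) : Prop :=
  (∀ u ∈ P, u.Nonempty) ∧ (∀ u ∈ P, ∀ u' ∈ P, u ≠ u' → Disjoint u u') ∧ P.biUnion id = q

/-- The edges of the term graph `G_P`. -/
def edgeRel (P : Finset (CQ R V)) (t t' : Term R V) : Prop :=
  ∃ u ∈ P, ∃ a ∈ u, ∃ a' ∈ u,
    (t = a.1 ∧ t' = a'.1) ∨ (t = a.2.1 ∧ t' = a'.2.1) ∨ (t = a.2.2 ∧ t' = a'.2.2)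

/-- Reachability in the term graph `G_P`. -/
def reach (P : Finset (CQ R V)) (t t' : Term R V) : Prop := Relation.EqvGen (edgeRel P) t t'

/-- `P` is unifiable: no two distinct resources of `q` are connected in `G_P`. -/
def UnifiablePart (q : CQ R V) (P : Finset (CQ R V)) : Prop :=
  ∀ r r' : R, Term.res r ∈ termsQ q → Term.res r' ∈ termsQ q →
    reach P (Term.res r) (Term.res r') → r = r'

/-- The partition base `B` of `q`: all unifiable partitions of `q`. -/
def pbase (q : CQ R V) : Set (Finset (CQ R V)) := {P | IsPartition q P ∧ UnifiablePart q P}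

/-- The partial order `⪯` on partitions. -/
def pref (P P' : Finset (CQ R V)) : Prop := ∀ u ∈ P, ∃ u' ∈ P', u ⊆ u'

/-- The strict order `≺` on partitions. -/
def sPref (P P' : Finset (CQ R V)) : Prop := pref P P' ∧ P ≠ P'

/-- Chains from `P` to `P'` in the partition base of `q` (as nonempty lists
`[P = P_0, …, P_ℓ = P']`; the length of the chain is the list length minus one). -/
def chainSet (q : CQ R V) (P P' : Finset (CQ R V)) : Set (List (Finset (CQ R V))) :=
  {l | l ≠ [] ∧ l.Chain' sPref ∧ (∀ X ∈ l, X ∈ pbase q) ∧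
    l.head? = some P ∧ l.getLast? = some P'}

/-- `K(P, P')`: the number of even-length chains minus the number of odd-length chains. -/
noncomputable def Kcoef (q : CQ R V) (P P' : Finset (CQ R V)) : ℤ :=
  ({l ∈ chainSet q P P' | Even (l.length - 1)}.ncard : ℤ)
    - ({l ∈ chainSet q P P' | Odd (l.length - 1)}.ncard : ℤ)

/-- `σ_P`: maps each variable `x` of `q` to the `≤`-least term reachable from `x` in `G_P`. -/
noncomputable def sigmaP [LinearOrder (Term R V)] (q : CQ R V) (P : Finset (CQ R V)) (x : V) :
    Term R V :=
  if h : ((termsQ q).filter (fun t => reach P (Term.var x) t)).Nonempty then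
    ((termsQ q).filter (fun t => reach P (Term.var x) t)).min' h
  else Term.var x

/-- The answer `τ` to `μ(q)` on `H` satisfies the partition `P`. -/
def satisfiesP [LinearOrder (Term R V)] (S : Summary R) (q : CQ R V) (τ : V → Option R)
    (P : Finset (CQ R V)) : Prop :=
  P ∈ pbase q ∧ ∀ x ∈ varsQ q,
    (∀ y, sigmaP q P x = Term.var y → τ x = τ y) ∧
    (∀ r, sigmaP q P x = Term.res r → τ x = some (appMu S r))

/-- `B_τ`: the partitions of the partition base satisfied by `τ`. -/
def Btau [LinearOrder (Term R V)] (S : Summary R) (q : CQ R V) (τ : V → Option R) :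
    Set (Finset (CQ R V)) := {P | satisfiesP S q τ P}

/-- The variables occurring in the range of `σ_P`. -/
noncomputable def vrngP [LinearOrder (Term R V)] (q : CQ R V) (P : Finset (CQ R V)) : Finset V :=
  (varsQ q).filter (fun y => ∃ x ∈ varsQ q, sigmaP q P x = Term.var y)

/-- The `S`-size of an optional bucket. -/
def sizeOpt (S : Summary R) (o : Option R) : ℕ := o.elim 0 (size1 S)

/-- `c(τ, P) = ∏_{x ∈ vrng(σ_P)} size_S(τ(x))`. -/
noncomputable def cCoef [LinearOrder (Term R V)] (S : Summary R) (q : CQ R V)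
    (τ : V → Option R) (P : Finset (CQ R V)) : ℕ :=
  ∏ y ∈ vrngP q P, sizeOpt S (τ y)

/-- `τ(μ(q))`. -/
noncomputable def tauMuQ [Inhabited R] (S : Summary R) (q : CQ R V) (τ : V → Option R) :
    RDFGraph R := (muQ S q).image (appAtomD τ)

/-- `n_h = |{u ∈ P : τ(μ(u)) = {h}}|`. -/
noncomputable def nCount [Inhabited R] (S : Summary R) (τ : V → Option R)
    (P : Finset (CQ R V)) (h : R × R × R) : ℕ :=
  (P.filter (fun u => u.image (fun a => appAtomD τ (muAtom S a)) = ({h} : Finset (R × R × R)))).card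

/-- `F(τ, P)`, defined via falling factorials. -/
noncomputable def Fcoef [Inhabited R] (S : Summary R) (q : CQ R V) (τ : V → Option R)
    (P : Finset (CQ R V)) : ℝ :=
  if ∀ h ∈ tauMuQ S q τ, nCount S τ P h ≤ S.w h then
    ∏ h ∈ tauMuQ S q τ,
      ((S.w h).descFactorial (nCount S τ P h) : ℝ) / ((size3 S h).descFactorial (nCount S τ P h) : ℝ)
  else 0

/-- `Exp_τ(P)`: the `τ`-expansions to `P`. -/
def ExpSet [LinearOrder (Term R V)] (S : Summary R) (q : CQ R V) (τ : V → Option R)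
    (P : Finset (CQ R V)) : Set (V → Option R) :=
  {π | (∀ x, (π x).isSome ↔ x ∈ varsQ q) ∧ (∀ x r, π x = some r → r ∈ S.dom) ∧
    ∀ x ∈ varsQ q,
      Option.map (appMu S) (π x) = τ x ∧
      (∀ y, sigmaP q P x = Term.var y → π x = π y) ∧
      (∀ r, sigmaP q P x = Term.res r → π x = some r)}

/-- `MaxExp_τ(P)`: the `τ`-expansions to `P` that are not `τ`-expansions to any `P' ≻ P`. -/
def MaxExp [LinearOrder (Term R V)] (S : Summary R) (q : CQ R V) (τ : V → Option R)
    (P : Finset (CQ R V)) : Set (V → Option R) :=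
  {π ∈ ExpSet S q τ P | ¬ ∃ P' ∈ Btau S q τ, sPref P P' ∧ π ∈ ExpSet S q τ P'}

/- ## Renaming, unification, q-error -/

def renTerm (ρ : V → V) : Term R V → Term R V
  | .res r => .res r
  | .var x => .var (ρ x)

/-- `ρ(q)`: renaming of the variables of `q` along `ρ`. -/
def renameQ (ρ : V → V) (q : CQ R V) : CQ R V :=
  q.image (fun a => (renTerm ρ a.1, renTerm ρ a.2.1, renTerm ρ a.2.2))

/-- Application of a variable-to-term substitution `κ` to a term. -/
def appK (κ : V → Term R V) : Term R V → Term R V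
  | .res r => .res r
  | .var x => κ x

/-- Two atoms are unifiable if some substitution `κ` makes them equal. -/
def unifAtoms (a1 a2 : Atom R V) : Prop :=
  ∃ κ : V → Term R V,
    (appK κ a1.1, appK κ a1.2.1, appK κ a1.2.2) = (appK κ a2.1, appK κ a2.2.1, appK κ a2.2.2)

/-- `q` is `μ`-unification-free: no two distinct atoms of `μ(q)` are unifiable. -/
def muUnifFree (S : Summary R) (q : CQ R V) : Prop :=
  ∀ a1 ∈ muQ S q, ∀ a2 ∈ muQ S q, a1 ≠ a2 → ¬ unifAtoms a1 a2

/-- The q-error of estimating a cardinality `N` as `E`. -/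
noncomputable def qerror (N E : ℝ) : ℝ := max (max N 1 / max E 1) (max E 1 / max N 1)

/-- A triple of resources viewed as a (variable-free) atom. -/
def resAtom (t : R × R × R) : Atom R V := (Term.res t.1, Term.res t.2.1, Term.res t.2.2)

/-- `μ⁻¹(h)`: the triples over `dom(μ)` that summarise as `h`. -/
def preim (S : Summary R) (h : R × R × R) : Finset (R × R × R) :=
  (S.dom ×ˢ S.dom ×ˢ S.dom).filter (fun t => muT S t = h)


/- ## Auxiliary development -/

section AuxCounting

open Finset

variable {α : Type*} [DecidableEq α]

lemma card_subsets_containing (X T : Finset α) (w : ℕ) (hT : T ⊆ X) (hw : T.card ≤ w) :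
    (X.powerset.filter (fun A => A.card = w ∧ T ⊆ A)).card
      = (X.card - T.card).choose (w - T.card) := by
  rw [← Finset.card_sdiff_of_subset hT, ← Finset.card_powersetCard (w - T.card) (X \ T)]
  apply Finset.card_bij' (fun A _ => A \ T) (fun B _ => B ∪ T)
  · intro A hA
    simp only [Finset.mem_filter, Finset.mem_powerset] at hA
    obtain ⟨hAX, hAcard, hTA⟩ := hA
    rw [Finset.mem_powersetCard]
    exact ⟨Finset.sdiff_subset_sdiff hAX (le_refl T), by rw [Finset.card_sdiff_of_subset hTA, hAcard]⟩
  · intro B hB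
    rw [Finset.mem_powersetCard] at hB
    obtain ⟨hBsub, hBcard⟩ := hB
    have hdisj : Disjoint B T := Finset.disjoint_of_subset_left hBsub (Finset.sdiff_disjoint)
    simp only [Finset.mem_filter, Finset.mem_powerset]
    refine ⟨Finset.union_subset (hBsub.trans Finset.sdiff_subset) hT, ?_, Finset.subset_union_right⟩
    rw [Finset.card_union_of_disjoint hdisj, hBcard]
    omega
  · intro A hA
    simp only [Finset.mem_filter, Finset.mem_powerset] at hA
    exact Finset.sdiff_union_of_subset hA.2.2
  · intro B hB
    rw [Finset.mem_powersetCard] at hB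
    have hdisj : Disjoint B T := Finset.disjoint_of_subset_left hB.1 (Finset.sdiff_disjoint)
    rw [Finset.union_sdiff_distrib, Finset.sdiff_self, Finset.union_empty,
      Finset.sdiff_eq_self_of_disjoint hdisj]

end AuxCounting

section AuxWorlds

open Finset

variable {R V : Type} [DecidableEq R] [DecidableEq V]

lemma mem_preim' {S : Summary R} {t h : R × R × R} :
    t ∈ preim S h ↔ (t.1 ∈ S.dom ∧ t.2.1 ∈ S.dom ∧ t.2.2 ∈ S.dom) ∧ muT S t = h := by
  obtain ⟨a, b, c⟩ := t
  simp [preim, Finset.mem_filter, Finset.mem_product, and_assoc]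

lemma card_preim (S : Summary R) (h : R × R × R) : (preim S h).card = size3 S h := by
  have he : preim S h = (S.dom.filter (fun r => S.μ r = h.1)) ×ˢ
      ((S.dom.filter (fun r => S.μ r = h.2.1)) ×ˢ (S.dom.filter (fun r => S.μ r = h.2.2))) := by
    ext ⟨a, b, c⟩
    simp only [mem_preim', Finset.mem_product, Finset.mem_filter, muT, appMu, Prod.ext_iff]
    constructor
    · rintro ⟨⟨h1, h2, h3⟩, e1, e2, e3⟩
      rw [if_pos h1] at e1; rw [if_pos h2] at e2; rw [if_pos h3] at e3
      exact ⟨⟨h1, e1⟩, ⟨h2, e2⟩, h3, e3⟩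
    · rintro ⟨⟨h1, e1⟩, ⟨h2, e2⟩, h3, e3⟩
      exact ⟨⟨h1, h2, h3⟩, by rw [if_pos h1]; exact e1, by rw [if_pos h2]; exact e2,
        by rw [if_pos h3]; exact e3⟩
  rw [he, Finset.card_product, Finset.card_product, size3, size1, size1, size1, mul_assoc]

lemma comp_mem_graphRes {G : RDFGraph R} {t : R × R × R} (ht : t ∈ G) :
    t.1 ∈ graphRes G ∧ t.2.1 ∈ graphRes G ∧ t.2.2 ∈ graphRes G := by
  refine ⟨?_, ?_, ?_⟩ <;> simp only [graphRes, Finset.mem_union, Finset.mem_image]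
  · exact Or.inl (Or.inl ⟨t, ht, rfl⟩)
  · exact Or.inl (Or.inr ⟨t, ht, rfl⟩)
  · exact Or.inr ⟨t, ht, rfl⟩

lemma mem_graphRes_elim {G : RDFGraph R} {r : R} (hr : r ∈ graphRes G) :
    ∃ t ∈ G, r = t.1 ∨ r = t.2.1 ∨ r = t.2.2 := by
  simp only [graphRes, Finset.mem_union, Finset.mem_image] at hr
  rcases hr with (⟨t, ht, rfl⟩ | ⟨t, ht, rfl⟩) | ⟨t, ht, rfl⟩
  · exact ⟨t, ht, Or.inl rfl⟩
  · exact ⟨t, ht, Or.inr (Or.inl rfl)⟩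
  · exact ⟨t, ht, Or.inr (Or.inr rfl)⟩

/-- The finite set of worlds of `S` containing a given set `T` of triples. -/
noncomputable def worldsFin (S : Summary R) (T : Finset (R × R × R)) : Finset (RDFGraph R) :=
  (S.H.biUnion (preim S)).powerset.filter
    (fun G => T ⊆ G ∧ ∀ h ∈ S.H, (G.filter (fun t => muT S t = h)).card = S.w h)

lemma mem_worldsFin {S : Summary R} {T : Finset (R × R × R)} {G : RDFGraph R} :
    G ∈ worldsFin S T ↔ G ∈ worlds S ∧ T ⊆ G := by
  simp only [worldsFin, Finset.mem_filter, Finset.mem_powerset]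
  constructor
  · rintro ⟨hsub, hT, hcard⟩
    have hmem : ∀ t ∈ G, muT S t ∈ S.H ∧ (t.1 ∈ S.dom ∧ t.2.1 ∈ S.dom ∧ t.2.2 ∈ S.dom) := by
      intro t ht
      obtain ⟨h, hh, htp⟩ := Finset.mem_biUnion.mp (hsub ht)
      rw [mem_preim'] at htp
      exact ⟨htp.2 ▸ hh, htp.1⟩
    refine ⟨⟨?_, ?_, fun h hh => (hcard h hh).symm⟩, hT⟩
    · intro r hr
      obtain ⟨t, ht, hrt⟩ := mem_graphRes_elim hr
      obtain ⟨-, h1, h2, h3⟩ := hmem t ht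
      rcases hrt with rfl | rfl | rfl <;> assumption
    · apply Finset.Subset.antisymm
      · intro h hh
        have hpos : 0 < (G.filter (fun t => muT S t = h)).card := (hcard h hh) ▸ S.w_pos h hh
        obtain ⟨t, htf⟩ := Finset.card_pos.mp hpos
        rw [Finset.mem_filter] at htf
        exact Finset.mem_image.mpr ⟨t, htf.1, htf.2⟩
      · intro h hh
        obtain ⟨t, ht, rfl⟩ := Finset.mem_image.mp hh
        exact (hmem t ht).1
  · rintro ⟨⟨hres, hH, hw⟩, hT⟩
    refine ⟨?_, hT, fun h hh => (hw h hh).symm⟩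
    intro t ht
    have h1 := comp_mem_graphRes ht
    have hmu : muT S t ∈ S.H := hH ▸ Finset.mem_image_of_mem _ ht
    exact Finset.mem_biUnion.mpr ⟨muT S t, hmu,
      mem_preim'.mpr ⟨⟨hres h1.1, hres h1.2.1, hres h1.2.2⟩, rfl⟩⟩

lemma worlds_eq_coe (S : Summary R) : worlds S = ↑(worldsFin S ∅) := by
  ext G
  rw [Finset.mem_coe, mem_worldsFin]
  simp only [Finset.empty_subset, and_true]

end AuxWorlds

section AuxCard

open Finset

variable {R V : Type} [DecidableEq R] [DecidableEq V]

lemma card_worldsFin (S : Summary R) (T : Finset (R × R × R))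
    (hTsub : T ⊆ S.H.biUnion (preim S))
    (hTw : ∀ h ∈ S.H, (T.filter (fun t => muT S t = h)).card ≤ S.w h) :
    (worldsFin S T).card
      = ∏ h ∈ S.H, (size3 S h - (T.filter (fun t => muT S t = h)).card).choose
          (S.w h - (T.filter (fun t => muT S t = h)).card) := by
  classical
  have hTmem : ∀ t ∈ T, muT S t ∈ S.H ∧ t ∈ preim S (muT S t) := by
    intro t ht
    obtain ⟨h, hh, htp⟩ := Finset.mem_biUnion.mp (hTsub ht)
    have := (mem_preim'.mp htp)
    exact ⟨this.2 ▸ hh, this.2 ▸ htp⟩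
  -- the target family of admissible bucket contents
  set Adm : (R × R × R) → Finset (Finset (R × R × R)) := fun h =>
    (preim S h).powerset.filter
      (fun A => A.card = S.w h ∧ T.filter (fun t => muT S t = h) ⊆ A) with hAdm
  have hcards : (worldsFin S T).card = (S.H.pi (fun h => Adm h)).card := by
    apply Finset.card_bij' (fun G _ => fun h _ => G.filter (fun t => muT S t = h))
      (fun f _ => S.H.attach.biUnion (fun h => f h.1 h.2))
    · -- maps into pi
      intro G hG
      have hTG : T ⊆ G := (mem_worldsFin.mp hG).2
      have hGsub : G ⊆ S.H.biUnion (preim S) :=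
        Finset.mem_powerset.mp (Finset.mem_filter.mp hG).1
      have hGmem : ∀ t ∈ G, muT S t ∈ S.H ∧ t ∈ preim S (muT S t) := by
        intro t ht
        obtain ⟨h, hh, htp⟩ := Finset.mem_biUnion.mp (hGsub ht)
        have := (mem_preim'.mp htp)
        exact ⟨this.2 ▸ hh, this.2 ▸ htp⟩
      rw [Finset.mem_pi]
      intro h hh
      rw [hAdm]
      simp only [Finset.mem_filter, Finset.mem_powerset]
      refine ⟨?_, ?_, Finset.filter_subset_filter _ hTG⟩
      · intro t ht
        rw [Finset.mem_filter] at ht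
        exact ht.2 ▸ (hGmem t ht.1).2
      · exact (Finset.mem_filter.mp hG).2.2 h hh
    · -- maps back into worldsFin
      intro f hf
      rw [Finset.mem_pi] at hf
      have hfsub : ∀ (h) (hh : h ∈ S.H), f h hh ⊆ preim S h := by
        intro h hh
        have := hf h hh
        rw [hAdm] at this
        simp only [Finset.mem_filter, Finset.mem_powerset] at this
        exact this.1
      have hfcard : ∀ (h) (hh : h ∈ S.H), (f h hh).card = S.w h := by
        intro h hh
        have := hf h hh
        rw [hAdm] at this
        simp only [Finset.mem_filter, Finset.mem_powerset] at this
        exact this.2.1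
      have hfT : ∀ (h) (hh : h ∈ S.H), T.filter (fun t => muT S t = h) ⊆ f h hh := by
        intro h hh
        have := hf h hh
        rw [hAdm] at this
        simp only [Finset.mem_filter, Finset.mem_powerset] at this
        exact this.2.2
      set G := S.H.attach.biUnion (fun h => f h.1 h.2) with hGdef
      have hGfilter : ∀ (h) (hh : h ∈ S.H), G.filter (fun t => muT S t = h) = f h hh := by
        intro h hh
        apply Finset.Subset.antisymm
        · intro t ht
          rw [Finset.mem_filter, hGdef, Finset.mem_biUnion] at ht
          obtain ⟨⟨⟨h', hh'⟩, -, htf⟩, hmu⟩ := ht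
          have : muT S t = h' := (mem_preim'.mp (hfsub h' hh' htf)).2
          have hhe : h' = h := by rw [← this, hmu]
          subst hhe
          exact htf
        · intro t ht
          rw [Finset.mem_filter]
          constructor
          · rw [hGdef, Finset.mem_biUnion]
            exact ⟨⟨h, hh⟩, Finset.mem_attach _ _, ht⟩
          · exact (mem_preim'.mp (hfsub h hh ht)).2
      rw [worldsFin, Finset.mem_filter, Finset.mem_powerset]
      refine ⟨?_, ?_, ?_⟩
      · intro t ht
        rw [hGdef, Finset.mem_biUnion] at ht
        obtain ⟨⟨h', hh'⟩, -, htf⟩ := ht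
        exact Finset.mem_biUnion.mpr ⟨h', hh', hfsub h' hh' htf⟩
      · intro t ht
        obtain ⟨hmu, htp⟩ := hTmem t ht
        have : t ∈ f (muT S t) hmu := hfT (muT S t) hmu (Finset.mem_filter.mpr ⟨ht, rfl⟩)
        rw [hGdef, Finset.mem_biUnion]
        exact ⟨⟨muT S t, hmu⟩, Finset.mem_attach _ _, this⟩
      · intro h hh
        rw [hGfilter h hh]
        exact hfcard h hh
    · -- left inverse
      intro G hG
      have hGsub : G ⊆ S.H.biUnion (preim S) :=
        Finset.mem_powerset.mp (Finset.mem_filter.mp hG).1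
      ext t
      rw [Finset.mem_biUnion]
      constructor
      · rintro ⟨⟨h, hh⟩, -, htf⟩
        exact (Finset.mem_filter.mp htf).1
      · intro ht
        obtain ⟨h, hh, htp⟩ := Finset.mem_biUnion.mp (hGsub ht)
        have hmu : muT S t = h := (mem_preim'.mp htp).2
        exact ⟨⟨h, hh⟩, Finset.mem_attach _ _, Finset.mem_filter.mpr ⟨ht, hmu⟩⟩
    · -- right inverse
      intro f hf
      rw [Finset.mem_pi] at hf
      have hfsub : ∀ (h) (hh : h ∈ S.H), f h hh ⊆ preim S h := by
        intro h hh
        have := hf h hh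
        rw [hAdm] at this
        simp only [Finset.mem_filter, Finset.mem_powerset] at this
        exact this.1
      funext h hh
      apply Finset.Subset.antisymm
      · intro t ht
        rw [Finset.mem_filter, Finset.mem_biUnion] at ht
        obtain ⟨⟨⟨h', hh'⟩, -, htf⟩, hmu⟩ := ht
        have : muT S t = h' := (mem_preim'.mp (hfsub h' hh' htf)).2
        have hhe : h' = h := by rw [← this, hmu]
        subst hhe
        exact htf
      · intro t ht
        rw [Finset.mem_filter, Finset.mem_biUnion]
        exact ⟨⟨⟨h, hh⟩, Finset.mem_attach _ _, ht⟩, (mem_preim'.mp (hfsub h hh ht)).2⟩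
  rw [hcards, Finset.card_pi]
  apply Finset.prod_congr rfl
  intro h hh
  rw [hAdm]
  have hsub : T.filter (fun t => muT S t = h) ⊆ preim S h := by
    intro t ht
    rw [Finset.mem_filter] at ht
    exact ht.2 ▸ (hTmem t ht.1).2
  have := card_subsets_containing (preim S h) (T.filter (fun t => muT S t = h)) (S.w h)
    hsub (hTw h hh)
  rw [this, card_preim]

lemma w_le_size3 {S : Summary R} (hcons : consistent S) :
    ∀ h ∈ S.H, S.w h ≤ size3 S h := by
  obtain ⟨G, hG⟩ := hcons
  have hG' : G ∈ worldsFin S ∅ := mem_worldsFin.mpr ⟨hG, Finset.empty_subset _⟩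
  intro h hh
  have hc := (Finset.mem_filter.mp hG').2.2 h hh
  have hsub : G.filter (fun t => muT S t = h) ⊆ preim S h := by
    intro t ht
    rw [Finset.mem_filter] at ht
    obtain ⟨h', hh', htp⟩ := Finset.mem_biUnion.mp
      ((Finset.mem_powerset.mp (Finset.mem_filter.mp hG').1) ht.1)
    have := (mem_preim'.mp htp).2
    rw [ht.2] at this
    exact this ▸ htp
  calc S.w h = (G.filter (fun t => muT S t = h)).card := hc.symm
    _ ≤ (preim S h).card := Finset.card_le_card hsub
    _ = size3 S h := card_preim S h

lemma worldsFin_empty_card_pos {S : Summary R} (hcons : consistent S) :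
    0 < (worldsFin S ∅).card := by
  obtain ⟨G, hG⟩ := hcons
  exact Finset.card_pos.mpr ⟨G, mem_worldsFin.mpr ⟨hG, Finset.empty_subset _⟩⟩

end AuxCard

section AuxExpect

open Finset

variable {R V : Type} [DecidableEq R] [DecidableEq V]

lemma ansSet_resAtoms [Inhabited R] (T : Finset (R × R × R)) (G : RDFGraph R) :
    ansSet (T.image (fun t => (resAtom t : Atom R V))) G
      = if T ⊆ G then {(fun _ => (none : Option R))} else ∅ := by
  have hvars : varsQ (T.image (fun t => (resAtom t : Atom R V))) = ∅ := by
    apply Finset.eq_empty_of_forall_notMem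
    intro x hx
    rw [varsQ, Finset.mem_biUnion] at hx
    obtain ⟨a, ha, hxa⟩ := hx
    obtain ⟨t, -, rfl⟩ := Finset.mem_image.mp ha
    simp [varsA, resAtom, varsT] at hxa
  by_cases hTG : T ⊆ G
  · rw [if_pos hTG]
    ext π
    simp only [ansSet, Set.mem_setOf_eq, Set.mem_singleton_iff]
    constructor
    · rintro ⟨h1, -⟩
      funext x
      have := h1 x
      rw [hvars] at this
      simp only [Finset.notMem_empty, iff_false, Option.isSome_iff_exists,
        not_exists] at this
      cases hx : π x with
      | none => rfl
      | some v => exact absurd hx (this v)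
    · rintro rfl
      refine ⟨by simp [hvars], ?_⟩
      intro a ha
      obtain ⟨t, ht, rfl⟩ := Finset.mem_image.mp ha
      have : appAtomD (fun _ => (none : Option R)) (resAtom t : Atom R V) = t := by
        simp [appAtomD, appTD, appT, resAtom]
      rw [this]
      exact hTG ht
  · rw [if_neg hTG]
    ext π
    simp only [ansSet, Set.mem_setOf_eq, Set.mem_empty_iff_false, iff_false, not_and]
    intro _ h2
    apply hTG
    intro t ht
    have ha : (resAtom t : Atom R V) ∈ T.image (fun t => (resAtom t : Atom R V)) :=
      Finset.mem_image_of_mem _ ht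
    have := h2 _ ha
    have he : appAtomD π (resAtom t : Atom R V) = t := by
      simp [appAtomD, appTD, appT, resAtom]
    rwa [he] at this

lemma expect_resAtoms [Inhabited R] (S : Summary R) (T : Finset (R × R × R)) :
    expect S (T.image (fun t => (resAtom t : Atom R V)))
      = ((worldsFin S T).card : ℝ) / ((worldsFin S ∅).card : ℝ) := by
  have hw : worlds S = ↑(worldsFin S ∅) := worlds_eq_coe S
  rw [_root_.expect, hw, finsum_mem_coe_finset, Set.ncard_coe_finset]
  congr 1
  have hstep : ∀ G ∈ worldsFin S ∅,
      (((ansSet (T.image (fun t => (resAtom t : Atom R V))) G).ncard : ℝ))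
        = (if T ⊆ G then (1 : ℝ) else 0) := by
    intro G _
    rw [ansSet_resAtoms]
    by_cases hTG : T ⊆ G
    · rw [if_pos hTG, if_pos hTG, Set.ncard_singleton, Nat.cast_one]
    · rw [if_neg hTG, if_neg hTG, Set.ncard_empty, Nat.cast_zero]
  rw [Finset.sum_congr rfl hstep, Finset.sum_boole]
  have hfe : (worldsFin S ∅).filter (fun G => T ⊆ G) = worldsFin S T := by
    ext G
    rw [Finset.mem_filter, mem_worldsFin, mem_worldsFin]
    simp only [Finset.empty_subset, and_true]
  rw [hfe]

section AuxTerms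

open Finset

variable {R V : Type} [DecidableEq R] [DecidableEq V]

lemma comp_mem_termsQ {q : CQ R V} {a : Atom R V} (ha : a ∈ q) :
    a.1 ∈ termsQ q ∧ a.2.1 ∈ termsQ q ∧ a.2.2 ∈ termsQ q := by
  refine ⟨?_, ?_, ?_⟩ <;>
    · rw [termsQ, Finset.mem_biUnion]
      exact ⟨a, ha, by simp⟩

lemma var_mem_varsQ {q : CQ R V} {x : V} (hx : Term.var x ∈ termsQ q) : x ∈ varsQ q := by
  rw [termsQ, Finset.mem_biUnion] at hx
  obtain ⟨a, ha, hxa⟩ := hx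
  rw [varsQ, Finset.mem_biUnion]
  refine ⟨a, ha, ?_⟩
  simp only [Finset.mem_insert, Finset.mem_singleton] at hxa
  rcases hxa with h | h | h <;>
    · rw [varsA]
      simp only [Finset.mem_union]
      first
      | exact Or.inl (Or.inl (by rw [← h]; simp [varsT]))
      | exact Or.inl (Or.inr (by rw [← h]; simp [varsT]))
      | exact Or.inr (by rw [← h]; simp [varsT])

lemma var_mem_termsQ {q : CQ R V} {x : V} (hx : x ∈ varsQ q) : Term.var x ∈ termsQ q := by
  rw [varsQ, Finset.mem_biUnion] at hx
  obtain ⟨a, ha, hxa⟩ := hx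
  rw [termsQ, Finset.mem_biUnion]
  refine ⟨a, ha, ?_⟩
  rw [varsA] at hxa
  simp only [Finset.mem_union] at hxa
  simp only [Finset.mem_insert, Finset.mem_singleton]
  rcases hxa with (h | h) | h
  · left
    cases e : a.1 with
    | res r => rw [e] at h; simp [varsT] at h
    | var y => rw [e] at h; simp [varsT] at h; rw [h, ← e]
  · right; left
    cases e : a.2.1 with
    | res r => rw [e] at h; simp [varsT] at h
    | var y => rw [e] at h; simp [varsT] at h; rw [h, ← e]
  · right; right
    cases e : a.2.2 with
    | res r => rw [e] at h; simp [varsT] at h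
    | var y => rw [e] at h; simp [varsT] at h; rw [h, ← e]

lemma res_mem_resQ {q : CQ R V} {r : R} (hr : (Term.res r : Term R V) ∈ termsQ q) :
    r ∈ resQ q := by
  rw [termsQ, Finset.mem_biUnion] at hr
  obtain ⟨a, ha, hra⟩ := hr
  rw [resQ, Finset.mem_biUnion]
  refine ⟨a, ha, ?_⟩
  simp only [Finset.mem_insert, Finset.mem_singleton] at hra
  rw [resA]
  simp only [Finset.mem_union]
  rcases hra with h | h | h
  · exact Or.inl (Or.inl (by rw [← h]; simp [resT]))
  · exact Or.inl (Or.inr (by rw [← h]; simp [resT]))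
  · exact Or.inr (by rw [← h]; simp [resT])

lemma sigmaP_spec [LinearOrder (Term R V)] {q : CQ R V} (P : Finset (CQ R V)) {x : V}
    (hx : Term.var x ∈ termsQ q) :
    sigmaP q P x ∈ termsQ q ∧ reach P (Term.var x) (sigmaP q P x) ∧
      ∀ t ∈ termsQ q, reach P (Term.var x) t → sigmaP q P x ≤ t := by
  have hne : ((termsQ q).filter (fun t => reach P (Term.var x) t)).Nonempty :=
    ⟨Term.var x, Finset.mem_filter.mpr ⟨hx, Relation.EqvGen.refl _⟩⟩
  rw [sigmaP, dif_pos hne]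
  have hmem := Finset.min'_mem _ hne
  rw [Finset.mem_filter] at hmem
  exact ⟨hmem.1, hmem.2, fun t ht hr => Finset.min'_le _ t (Finset.mem_filter.mpr ⟨ht, hr⟩)⟩

lemma sigmaP_eq_of_reach [LinearOrder (Term R V)] {q : CQ R V} {P : Finset (CQ R V)} {x y : V}
    (hx : Term.var x ∈ termsQ q)
    (hr : reach P (Term.var x) (Term.var y)) : sigmaP q P x = sigmaP q P y := by
  have hset : (termsQ q).filter (fun t => reach P (Term.var x) t)
      = (termsQ q).filter (fun t => reach P (Term.var y) t) := by
    ext t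
    simp only [Finset.mem_filter, and_congr_right_iff]
    intro _
    exact ⟨fun h => Relation.EqvGen.trans _ _ _ (Relation.EqvGen.symm _ _ hr) h,
      fun h => Relation.EqvGen.trans _ _ _ hr h⟩
  have hne : ((termsQ q).filter (fun t => reach P (Term.var x) t)).Nonempty :=
    ⟨Term.var x, Finset.mem_filter.mpr ⟨hx, Relation.EqvGen.refl _⟩⟩
  rw [sigmaP, sigmaP, dif_pos hne, dif_pos (hset ▸ hne)]
  congr 1

lemma reach_congr {α : Type*} {P : Finset (CQ R V)} {f : Term R V → α}
    (h : ∀ t t', edgeRel P t t' → f t = f t') :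
    ∀ t t', reach P t t' → f t = f t' := by
  intro t t' hr
  induction hr with
  | rel a b hab => exact h a b hab
  | refl a => rfl
  | symm a b _ ih => exact ih.symm
  | trans a b c _ _ ih1 ih2 => exact ih1.trans ih2

end AuxTerms

section AuxRatio

lemma cast_descFactorial_eq (k n : ℕ) (h : k ≤ n) :
    ((n.descFactorial k : ℕ) : ℝ) = (n.factorial : ℝ) / ((n - k).factorial : ℝ) := by
  have := Nat.factorial_mul_descFactorial h
  have hpos : ((n - k).factorial : ℝ) ≠ 0 := Nat.cast_ne_zero.mpr (Nat.factorial_ne_zero _)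
  field_simp
  rw [mul_comm]
  exact_mod_cast congrArg (Nat.cast (R := ℝ)) this

lemma choose_ratio {s w m : ℕ} (hm : m ≤ w) (hw : w ≤ s) :
    (((s - m).choose (w - m) : ℕ) : ℝ) / ((s.choose w : ℕ) : ℝ)
      = ((w.descFactorial m : ℕ) : ℝ) / ((s.descFactorial m : ℕ) : ℝ) := by
  have h1 : w - m ≤ s - m := by omega
  rw [Nat.cast_choose ℝ h1, Nat.cast_choose ℝ hw,
    cast_descFactorial_eq m w hm, cast_descFactorial_eq m s (hm.trans hw)]
  have e1 : s - m - (w - m) = s - w := by omega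
  rw [e1]
  have f1 : ((w - m).factorial : ℝ) ≠ 0 := Nat.cast_ne_zero.mpr (Nat.factorial_ne_zero _)
  have f2 : ((s - w).factorial : ℝ) ≠ 0 := Nat.cast_ne_zero.mpr (Nat.factorial_ne_zero _)
  have f3 : ((s - m).factorial : ℝ) ≠ 0 := Nat.cast_ne_zero.mpr (Nat.factorial_ne_zero _)
  have f4 : (w.factorial : ℝ) ≠ 0 := Nat.cast_ne_zero.mpr (Nat.factorial_ne_zero _)
  have f5 : (s.factorial : ℝ) ≠ 0 := Nat.cast_ne_zero.mpr (Nat.factorial_ne_zero _)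
  field_simp

end AuxRatio
/-- For `π ∈ MaxExp_τ(P)`, the expectation of the variable-free query
`π(q)` satisfies `E_S[π(q)] = F(τ,P)`. -/
theorem expect_image_eq_Fcoef {R V : Type} [DecidableEq R] [DecidableEq V] [Inhabited R]
    [LinearOrder (Term R V)]
    (hord : ∀ (r : R) (y : V), (Term.res r : Term R V) < Term.var y)
    (S : Summary R) (hcons : consistent S) (q : CQ R V) (hq : resQ q ⊆ S.dom)
    (τ : V → Option R) (hτ : τ ∈ ansSet (muQ S q) S.H)
    (P : Finset (CQ R V)) (hP : P ∈ Btau S q τ)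
    (π : V → Option R) (hπ : π ∈ MaxExp S q τ P) :
    expect S (q.image (fun a => (resAtom (appAtomD π a) : Atom R V))) = Fcoef S q τ P := by
  classical
  obtain ⟨hπexp, hπmax⟩ := hπ
  obtain ⟨hπ1, hπ2, hπ3⟩ := hπexp
  obtain ⟨hPbase, hPsat⟩ := hP
  obtain ⟨⟨hPne, hPdisj, hPun⟩, hPunif⟩ := hPbase
  have hblocksub : ∀ u ∈ P, u ⊆ q := by
    intro u hu a ha
    rw [← hPun]
    exact Finset.mem_biUnion.mpr ⟨u, hu, ha⟩
  have hsome : ∀ x ∈ varsQ q, ∃ v, π x = some v ∧ v ∈ S.dom := by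
    intro x hx
    obtain ⟨v, hv⟩ := Option.isSome_iff_exists.mp ((hπ1 x).mpr hx)
    exact ⟨v, hv, hπ2 x v hv⟩
  -- edge of `G_P` implies equal `π`-values
  have hvarres : ∀ (x : V) (r : R), Term.var x ∈ termsQ q →
      (Term.res r : Term R V) ∈ termsQ q →
      reach P (Term.var x) (Term.res r) → π x = some r := by
    intro x r hx hr hre
    obtain ⟨hσq, hσr, hσmin⟩ := sigmaP_spec P hx (q := q)
    have hle := hσmin _ hr hre
    cases e : sigmaP q P x with
    | var z =>
      rw [e] at hle
      exact absurd (lt_of_lt_of_le (hord r z) hle) (lt_irrefl _)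
    | res r'' =>
      have hre'' : reach P (Term.var x) (Term.res r'') := by rw [← e]; exact hσr
      have hrr : r'' = r := hPunif r'' r (by rw [← e]; exact hσq) hr
        (Relation.EqvGen.trans _ _ _ (Relation.EqvGen.symm _ _ hre'') hre)
      subst hrr
      exact (hπ3 x (var_mem_varsQ hx)).2.2 r'' e
  have hgen : ∀ t ∈ termsQ q, ∀ t' ∈ termsQ q, reach P t t' → appTD π t = appTD π t' := by
    intro t ht t' ht' hre
    cases t with
    | res r =>
      cases t' with
      | res r' => rw [hPunif r r' ht ht' hre]
      | var y =>
        have h1 := hvarres y r ht' ht (Relation.EqvGen.symm _ _ hre)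
        simp [appTD, appT, h1]
    | var x =>
      cases t' with
      | res r' =>
        have h1 := hvarres x r' ht ht' hre
        simp [appTD, appT, h1]
      | var y =>
        have hσ : sigmaP q P x = sigmaP q P y := sigmaP_eq_of_reach ht hre
        have hx := var_mem_varsQ ht
        have hy := var_mem_varsQ ht'
        cases e : sigmaP q P x with
        | var z =>
          have e' : sigmaP q P y = Term.var z := by rw [← hσ, e]
          have exz := (hπ3 x hx).2.1 z e
          have eyz := (hπ3 y hy).2.1 z e'
          simp [appTD, appT, exz, eyz]
        | res r =>
          have e' : sigmaP q P y = Term.res r := by rw [← hσ, e]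
          have exr := (hπ3 x hx).2.2 r e
          have eyr := (hπ3 y hy).2.2 r e'
          simp [appTD, appT, exr, eyr]
  have hedgeP : ∀ t t', edgeRel P t t' → appTD π t = appTD π t' := by
    rintro t t' ⟨u, hu, a, ha, a', ha', hc⟩
    have haq : a ∈ q := hblocksub u hu ha
    have ha'q : a' ∈ q := hblocksub u hu ha'
    have htq : t ∈ termsQ q := by
      rcases hc with ⟨h1, -⟩ | ⟨h1, -⟩ | ⟨h1, -⟩ <;> rw [h1]
      exacts [(comp_mem_termsQ haq).1, (comp_mem_termsQ haq).2.1, (comp_mem_termsQ haq).2.2]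
    have ht'q : t' ∈ termsQ q := by
      rcases hc with ⟨-, h1⟩ | ⟨-, h1⟩ | ⟨-, h1⟩ <;> rw [h1]
      exacts [(comp_mem_termsQ ha'q).1, (comp_mem_termsQ ha'q).2.1, (comp_mem_termsQ ha'q).2.2]
    exact hgen t htq t' ht'q (Relation.EqvGen.rel _ _ ⟨u, hu, a, ha, a', ha', hc⟩)
  have hreachP : ∀ t t', reach P t t' → appTD π t = appTD π t' := reach_congr hedgeP
  -- constancy of `π` on blocks
  have hblock : ∀ u ∈ P, ∀ a ∈ u, ∀ a' ∈ u, appAtomD π a = appAtomD π a' := by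
    intro u hu a ha a' ha'
    have h1 : appTD π a.1 = appTD π a'.1 :=
      hreachP _ _ (Relation.EqvGen.rel _ _ ⟨u, hu, a, ha, a', ha', Or.inl ⟨rfl, rfl⟩⟩)
    have h2 : appTD π a.2.1 = appTD π a'.2.1 :=
      hreachP _ _ (Relation.EqvGen.rel _ _ ⟨u, hu, a, ha, a', ha', Or.inr (Or.inl ⟨rfl, rfl⟩)⟩)
    have h3 : appTD π a.2.2 = appTD π a'.2.2 :=
      hreachP _ _ (Relation.EqvGen.rel _ _ ⟨u, hu, a, ha, a', ha', Or.inr (Or.inr ⟨rfl, rfl⟩)⟩)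
    simp only [appAtomD, h1, h2, h3]
  -- compatibility with `μ`
  have hmuTerm : ∀ t ∈ termsQ q, appMu S (appTD π t) = appTD τ (muTerm S t) := by
    intro t ht
    cases t with
    | res r => simp [appTD, appT, muTerm]
    | var x =>
      have hx := var_mem_varsQ ht
      obtain ⟨v, hv, -⟩ := hsome x hx
      have hτx : τ x = some (appMu S v) := by
        have h1 := (hπ3 x hx).1
        rw [hv] at h1
        simpa using h1.symm
      simp [appTD, appT, muTerm, hv, hτx]
  have hmuT : ∀ a ∈ q, muT S (appAtomD π a) = appAtomD τ (muAtom S a) := by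
    intro a ha
    obtain ⟨h1, h2, h3⟩ := comp_mem_termsQ ha
    simp only [muT, appAtomD, muAtom]
    rw [hmuTerm _ h1, hmuTerm _ h2, hmuTerm _ h3]
  -- maximality: distinct blocks yield distinct triples
  have hinj : ∀ u ∈ P, ∀ u' ∈ P, u ≠ u' → ∀ a ∈ u, ∀ a' ∈ u',
      appAtomD π a ≠ appAtomD π a' := by
    intro u hu u' hu' hne a ha a' ha' heq
    set P' : Finset (CQ R V) := insert (u ∪ u') ((P.erase u).erase u') with hP'def
    have hmemP' : ∀ v ∈ P', v = u ∪ u' ∨ (v ∈ P ∧ v ≠ u ∧ v ≠ u') := by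
      intro v hv
      rcases Finset.mem_insert.mp hv with h | h
      · exact Or.inl h
      · rw [Finset.mem_erase, Finset.mem_erase] at h
        exact Or.inr ⟨h.2.2, h.2.1, h.1⟩
    have hsub' : ∀ v ∈ P', v ⊆ q := by
      intro v hv
      rcases hmemP' v hv with rfl | ⟨hvP, -, -⟩
      · exact Finset.union_subset (hblocksub u hu) (hblocksub u' hu')
      · exact hblocksub v hvP
    have hconst : ∀ b ∈ u ∪ u', appAtomD π b = appAtomD π a := by
      intro b hb
      rcases Finset.mem_union.mp hb with h | h
      · exact hblock u hu b h a ha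
      · exact (hblock u' hu' b h a' ha').trans heq.symm
    have hblocks' : ∀ v ∈ P', ∀ b ∈ v, ∀ b' ∈ v, appAtomD π b = appAtomD π b' := by
      intro v hv b hb b' hb'
      rcases hmemP' v hv with rfl | ⟨hvP, -, -⟩
      · rw [hconst b hb, hconst b' hb']
      · exact hblock v hvP b hb b' hb'
    have hedge' : ∀ t t', edgeRel P' t t' → appTD π t = appTD π t' := by
      rintro t t' ⟨v, hv, b, hb, b', hb', hc⟩
      have hbb' := hblocks' v hv b hb b' hb'
      rcases hc with ⟨e1, e2⟩ | ⟨e1, e2⟩ | ⟨e1, e2⟩ <;> subst e1 <;> subst e2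
      · exact congrArg (fun z => z.1) hbb'
      · exact congrArg (fun z => z.2.1) hbb'
      · exact congrArg (fun z => z.2.2) hbb'
    have hreach' : ∀ t t', reach P' t t' → appTD π t = appTD π t' := reach_congr hedge'
    have hP'unif : UnifiablePart q P' := by
      intro r r' _ _ hre
      have h1 := hreach' _ _ hre
      simpa [appTD, appT] using h1
    have hP'part : IsPartition q P' := by
      refine ⟨?_, ?_, ?_⟩
      · intro v hv
        rcases hmemP' v hv with rfl | ⟨hvP, -, -⟩
        · exact (hPne u hu).mono Finset.subset_union_left
        · exact hPne v hvP
      · intro v hv v' hv' hvv'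
        rcases hmemP' v hv with hveq | ⟨hvP, hvu, hvu'⟩
        · rcases hmemP' v' hv' with hv'eq | ⟨hv'P, hv'u, hv'u'⟩
          · exact absurd (hveq.trans hv'eq.symm) hvv'
          · rw [hveq, Finset.disjoint_union_left]
            exact ⟨hPdisj u hu v' hv'P (Ne.symm hv'u), hPdisj u' hu' v' hv'P (Ne.symm hv'u')⟩
        · rcases hmemP' v' hv' with hv'eq | ⟨hv'P, hv'u, hv'u'⟩
          · rw [hv'eq, Finset.disjoint_union_right]
            exact ⟨hPdisj v hvP u hu hvu, hPdisj v hvP u' hu' hvu'⟩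
          · exact hPdisj v hvP v' hv'P hvv'
      · ext b
        rw [Finset.mem_biUnion]
        constructor
        · rintro ⟨v, hv, hbv⟩
          exact hsub' v hv hbv
        · intro hbq
          rw [← hPun, Finset.mem_biUnion] at hbq
          obtain ⟨v, hv, hbv⟩ := hbq
          by_cases h1 : v = u
          · exact ⟨u ∪ u', Finset.mem_insert_self _ _, Finset.mem_union_left _ (h1 ▸ hbv)⟩
          by_cases h2 : v = u'
          · exact ⟨u ∪ u', Finset.mem_insert_self _ _, Finset.mem_union_right _ (h2 ▸ hbv)⟩
          · exact ⟨v, Finset.mem_insert_of_mem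
              (Finset.mem_erase.mpr ⟨h2, Finset.mem_erase.mpr ⟨h1, hv⟩⟩), hbv⟩
    have hP'base : P' ∈ pbase q := ⟨hP'part, hP'unif⟩
    have hσ' : ∀ x ∈ varsQ q,
        (∀ y, sigmaP q P' x = Term.var y → π x = π y) ∧
        (∀ r, sigmaP q P' x = Term.res r → π x = some r) := by
      intro x hx
      have hxt : Term.var x ∈ termsQ q := var_mem_termsQ hx
      obtain ⟨hσq, hσr, -⟩ := sigmaP_spec P' hxt (q := q)
      constructor
      · intro y hy
        rw [hy] at hσr hσq
        have heqt := hreach' _ _ hσr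
        obtain ⟨v, hv, -⟩ := hsome x hx
        obtain ⟨v', hv', -⟩ := hsome y (var_mem_varsQ hσq)
        have hvv : v = v' := by simpa [appTD, appT, hv, hv'] using heqt
        rw [hv, hv', hvv]
      · intro r hr
        rw [hr] at hσr
        have heqt := hreach' _ _ hσr
        obtain ⟨v, hv, -⟩ := hsome x hx
        have hvr : v = r := by simpa [appTD, appT, hv] using heqt
        rw [hv, hvr]
    have hπP' : π ∈ ExpSet S q τ P' :=
      ⟨hπ1, hπ2, fun x hx => ⟨(hπ3 x hx).1, (hσ' x hx).1, (hσ' x hx).2⟩⟩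
    have hτP' : satisfiesP S q τ P' := by
      refine ⟨hP'base, fun x hx => ⟨?_, ?_⟩⟩
      · intro y hy
        have hπxy := (hσ' x hx).1 y hy
        have hxt : Term.var x ∈ termsQ q := var_mem_termsQ hx
        obtain ⟨hσq, -, -⟩ := sigmaP_spec P' hxt (q := q)
        rw [hy] at hσq
        have hyv : y ∈ varsQ q := var_mem_varsQ hσq
        rw [← (hπ3 x hx).1, ← (hπ3 y hyv).1, hπxy]
      · intro r hr
        have hπxr := (hσ' x hx).2 r hr
        rw [← (hπ3 x hx).1, hπxr, Option.map_some]
    have hprefPP' : pref P P' := by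
      intro v hv
      by_cases h1 : v = u
      · exact ⟨u ∪ u', Finset.mem_insert_self _ _, by rw [h1]; exact Finset.subset_union_left⟩
      by_cases h2 : v = u'
      · exact ⟨u ∪ u', Finset.mem_insert_self _ _, by rw [h2]; exact Finset.subset_union_right⟩
      · exact ⟨v, Finset.mem_insert_of_mem
          (Finset.mem_erase.mpr ⟨h2, Finset.mem_erase.mpr ⟨h1, hv⟩⟩), Finset.Subset.refl v⟩
    have hPneP' : P ≠ P' := by
      intro hPP'
      have huP' : u ∈ P' := hPP' ▸ hu
      rcases hmemP' u huP' with h | ⟨-, h, -⟩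
      · have hu'sub : u' ⊆ u := by rw [h]; exact Finset.subset_union_right
        obtain ⟨b, hb⟩ := hPne u' hu'
        exact (Finset.disjoint_left.mp (hPdisj u hu u' hu' hne)) (hu'sub hb) hb
      · exact h rfl
    exact hπmax ⟨P', hτP', ⟨hprefPP', hPneP'⟩, hπP'⟩
  -- the set of triples of `π(q)`
  set T : Finset (R × R × R) := q.image (appAtomD π) with hTdef
  have hcount : ∀ h : R × R × R,
      (T.filter (fun t => muT S t = h)).card = nCount S τ P h := by
    intro h
    unfold nCount
    symm
    have himgiff : ∀ u ∈ P,
        (u.image (fun a => appAtomD τ (muAtom S a)) = ({h} : Finset (R × R × R)))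
          ↔ ∀ a ∈ u, muT S (appAtomD π a) = h := by
      intro u hu
      have hic : u.image (fun a => appAtomD τ (muAtom S a))
          = u.image (fun a => muT S (appAtomD π a)) :=
        Finset.image_congr (fun a ha => (hmuT a (hblocksub u hu ha)).symm)
      rw [hic]
      constructor
      · intro he b hb
        have hmem : muT S (appAtomD π b) ∈ ({h} : Finset (R × R × R)) :=
          he ▸ Finset.mem_image_of_mem _ hb
        exact Finset.mem_singleton.mp hmem
      · intro hall
        apply Finset.Subset.antisymm
        · intro b hb
          obtain ⟨c, hc, rfl⟩ := Finset.mem_image.mp hb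
          exact Finset.mem_singleton.mpr (hall c hc)
        · intro b hb
          rw [Finset.mem_singleton] at hb
          obtain ⟨c, hc⟩ := hPne u hu
          subst hb
          exact (hall c hc) ▸ Finset.mem_image_of_mem _ hc
    apply Finset.card_bij
      (fun u hu => appAtomD π ((hPne u (Finset.mem_filter.mp hu).1).choose))
    · intro u hu
      obtain ⟨huP, huim⟩ := Finset.mem_filter.mp hu
      have ha0 := (hPne u huP).choose_spec
      rw [Finset.mem_filter]
      exact ⟨Finset.mem_image_of_mem _ (hblocksub u huP ha0),
        (himgiff u huP).mp huim _ ha0⟩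
    · intro u1 hu1 u2 hu2 hi
      by_contra hne12
      have hm1 := (Finset.mem_filter.mp hu1).1
      have hm2 := (Finset.mem_filter.mp hu2).1
      exact hinj u1 hm1 u2 hm2 hne12
        _ (hPne u1 hm1).choose_spec _ (hPne u2 hm2).choose_spec hi
    · intro t ht
      rw [Finset.mem_filter] at ht
      obtain ⟨htT, htmu⟩ := ht
      obtain ⟨a, haq, rfl⟩ := Finset.mem_image.mp htT
      have haP : a ∈ P.biUnion id := hPun.symm ▸ haq
      obtain ⟨u, hu, hau⟩ := Finset.mem_biUnion.mp haP
      have huim : u.image (fun b => appAtomD τ (muAtom S b)) = ({h} : Finset (R × R × R)) := by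
        rw [himgiff u hu]
        intro b hb
        rw [hblock u hu b hb a hau]
        exact htmu
      exact ⟨u, Finset.mem_filter.mpr ⟨hu, huim⟩, hblock u hu _ (hPne u hu).choose_spec a hau⟩
  have htauH : tauMuQ S q τ ⊆ S.H := by
    intro h hh
    obtain ⟨a, ha, rfl⟩ := Finset.mem_image.mp hh
    exact hτ.2 a ha
  have hdomT : ∀ t ∈ termsQ q, appTD π t ∈ S.dom := by
    intro t ht
    cases t with
    | res r => simpa [appTD, appT] using hq (res_mem_resQ ht)
    | var x =>
      obtain ⟨v, hv, hvdom⟩ := hsome x (var_mem_varsQ ht)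
      simpa [appTD, appT, hv] using hvdom
  have hmuTmem : ∀ t ∈ T, muT S t ∈ tauMuQ S q τ := by
    intro t htT
    obtain ⟨a, haq, rfl⟩ := Finset.mem_image.mp htT
    rw [hmuT a haq]
    exact Finset.mem_image_of_mem _ (Finset.mem_image_of_mem _ haq)
  have hTsub : T ⊆ S.H.biUnion (preim S) := by
    intro t htT
    obtain ⟨a, haq, rfl⟩ := Finset.mem_image.mp htT
    obtain ⟨h1, h2, h3⟩ := comp_mem_termsQ haq
    exact Finset.mem_biUnion.mpr ⟨muT S (appAtomD π a),
      htauH (hmuTmem _ (Finset.mem_image_of_mem _ haq)),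
      mem_preim'.mpr ⟨⟨hdomT _ h1, hdomT _ h2, hdomT _ h3⟩, rfl⟩⟩
  have hm0 : ∀ h ∉ tauMuQ S q τ, (T.filter (fun t => muT S t = h)).card = 0 := by
    intro h hh
    rw [Finset.card_eq_zero, Finset.filter_eq_empty_iff]
    intro t htT hmu
    exact hh (hmu ▸ hmuTmem t htT)
  have himg : q.image (fun a => (resAtom (appAtomD π a) : Atom R V))
      = T.image (fun t => (resAtom t : Atom R V)) := by
    rw [hTdef, Finset.image_image]
    rfl
  rw [himg, expect_resAtoms S T]
  by_cases hgood : ∀ h ∈ tauMuQ S q τ, nCount S τ P h ≤ S.w h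
  · have hTw : ∀ h ∈ S.H, (T.filter (fun t => muT S t = h)).card ≤ S.w h := by
      intro h hh
      by_cases hht : h ∈ tauMuQ S q τ
      · rw [hcount h]; exact hgood h hht
      · rw [hm0 h hht]; exact Nat.zero_le _
    rw [card_worldsFin S T hTsub hTw,
      card_worldsFin S ∅ (Finset.empty_subset _) (fun h _ => by simp)]
    have hzero : (∏ h ∈ S.H,
        (size3 S h - ((∅ : Finset (R × R × R)).filter (fun t => muT S t = h)).card).choose
          (S.w h - ((∅ : Finset (R × R × R)).filter (fun t => muT S t = h)).card))
        = ∏ h ∈ S.H, (size3 S h).choose (S.w h) := by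
      apply Finset.prod_congr rfl
      intro h _
      rw [Finset.filter_empty, Finset.card_empty, Nat.sub_zero, Nat.sub_zero]
    rw [hzero]
    push_cast
    rw [← Finset.prod_div_distrib]
    have hstep1 : ∀ h ∈ S.H,
        (((size3 S h - (T.filter (fun t => muT S t = h)).card).choose
            (S.w h - (T.filter (fun t => muT S t = h)).card) : ℕ) : ℝ)
          / (((size3 S h).choose (S.w h) : ℕ) : ℝ)
        = (((S.w h).descFactorial ((T.filter (fun t => muT S t = h)).card) : ℕ) : ℝ)
          / (((size3 S h).descFactorial ((T.filter (fun t => muT S t = h)).card) : ℕ) : ℝ) :=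
      fun h hh => choose_ratio (hTw h hh) (w_le_size3 hcons h hh)
    rw [Finset.prod_congr rfl hstep1]
    simp only [hcount]
    rw [Fcoef, if_pos hgood]
    refine (Finset.prod_subset htauH ?_).symm
    intro h _ hht
    rw [← hcount h, hm0 h hht]
    simp [Nat.descFactorial_zero]
  · have hbad' := hgood
    push_neg at hbad'
    obtain ⟨h0, hh0, hbad⟩ := hbad'
    have hTempty : worldsFin S T = ∅ := by
      rw [Finset.eq_empty_iff_forall_notMem]
      intro G hG
      have hTG : T ⊆ G := (mem_worldsFin.mp hG).2
      have hcardG : (G.filter (fun t => muT S t = h0)).card = S.w h0 :=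
        (Finset.mem_filter.mp hG).2.2 h0 (htauH hh0)
      have hle : (T.filter (fun t => muT S t = h0)).card
          ≤ (G.filter (fun t => muT S t = h0)).card :=
        Finset.card_le_card (Finset.filter_subset_filter _ hTG)
      rw [hcount h0, hcardG] at hle
      exact absurd hle (not_le.mpr hbad)
    rw [hTempty, Fcoef, if_neg hgood]
    simp
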